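/- arXiv:2309.17096 — 9 statements merged into one kernel-verified Lean document; each statement's English description precedes it below -/
import Mathlib

section
/- Let A ∈ ℂ^{d×d} be Hermitian, b ∈ ℂ^d, and let B be the Moore–Penrose pseudo-inverse of A. Suppose that for some t ≥ 1 the vector x belongs to the Krylov subspace K_t(A, b), that the residual r = b − A x satisfies A r = 0 (i.e., x is a global least-squares solution of min_v ‖b − A v‖), and that r ≠ 0. Then the lifted vector x − (⟨r, x⟩ / ‖r‖²) · r equals B b, the pseudo-inverse solution of the least-squares problem. -/
open Matrix

/-- `B` is the Moore–Penrose pseudo-inverse of `A`. -/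
def IsMoorePenrose {n m : Type*} [Fintype n] [Fintype m]
    (A : Matrix n m ℂ) (B : Matrix m n ℂ) : Prop :=
  A * B * A = A ∧ B * A * B = B ∧ (A * B)ᴴ = A * B ∧ (B * A)ᴴ = B * A

/-- The Krylov subspace `K_t(A, b) = span {b, Ab, …, A^{t-1} b}`. -/
noncomputable def Krylov {n : Type*} [Fintype n] [DecidableEq n]
    (A : Matrix n n ℂ) (b : n → ℂ) (t : ℕ) : Submodule ℂ (n → ℂ) :=
  Submodule.span ℂ {v | ∃ i < t, v = (A ^ i).mulVec b}

/-- Lifting for Hermitian systems: if `x ∈ K_t(A,b)` is a global least-squares solution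
with nonzero residual `r = b - A x`, then the lifted vector
`x - (⟨r,x⟩/‖r‖²) r` equals the pseudo-inverse solution `A† b`. -/
theorem lifting_hermitian {d : ℕ}
    (A B : Matrix (Fin d) (Fin d) ℂ) (b x r : Fin d → ℂ) (t : ℕ)
    (ht : 1 ≤ t)
    (hA : A.IsHermitian)
    (hB : IsMoorePenrose A B)
    (hx : x ∈ Krylov A b t)
    (hr : r = b - A.mulVec x)
    (hls : A.mulVec r = 0)
    (hrne : r ≠ 0) :
    x - ((star r ⬝ᵥ x) / (star r ⬝ᵥ r)) • r = B.mulVec b := by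
  have hc : (star r ⬝ᵥ r) ≠ 0 := by
    open scoped ComplexOrder in
    rw [Ne, dotProduct_star_self_eq_zero]
    exact hrne
  -- rᴴ A = 0
  have hrA : ∀ v : Fin d → ℂ, star r ⬝ᵥ A.mulVec v = 0 := by
    intro v
    have h0 : vecMul (star r) A = 0 := by
      have := star_mulVec (M := A) (v := r)
      rw [hls, hA.eq] at this
      simpa using this.symm
    rw [dotProduct_mulVec, h0, zero_dotProduct]
  -- B * A = A * Bᴴ
  have hBA : B * A = A * Bᴴ := by
    calc B * A = (B * A)ᴴ := hB.2.2.2.symm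
    _ = Aᴴ * Bᴴ := by rw [conjTranspose_mul]
    _ = A * Bᴴ := by rw [hA.eq]
  -- A * Bᴴ * A = A
  have h1 : A * Bᴴ * A = A := by
    have := congrArg conjTranspose hB.1
    simpa [conjTranspose_mul, hA.eq, Matrix.mul_assoc] using this
  have hBAA : B * A * A = A := by
    rw [hBA]; exact h1
  -- A * B = Bᴴ * A
  have hAB : A * B = Bᴴ * A := by
    calc A * B = (A * B)ᴴ := hB.2.2.1.symm
    _ = Bᴴ * Aᴴ := by rw [conjTranspose_mul]
    _ = Bᴴ * A := by rw [hA.eq]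
  -- B r = 0
  have hABr : A.mulVec (B.mulVec r) = 0 := by
    rw [mulVec_mulVec, hAB, ← mulVec_mulVec, hls, mulVec_zero]
  have hBr : B.mulVec r = 0 := by
    have : B.mulVec r = (B * A * B).mulVec r := by rw [hB.2.1]
    rw [this, Matrix.mul_assoc, ← mulVec_mulVec, ← mulVec_mulVec, hABr, mulVec_zero]
  have hb : b = r + A.mulVec x := by rw [hr]; abel
  -- B (A (A v)) = A v
  have hBAAv : ∀ v : Fin d → ℂ, B.mulVec (A.mulVec (A.mulVec v)) = A.mulVec v := by
    intro v
    rw [mulVec_mulVec, mulVec_mulVec, hBAA]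
  have key : ∀ v ∈ Krylov A b t,
      B.mulVec (A.mulVec v) = v - ((star r ⬝ᵥ v) / (star r ⬝ᵥ r)) • r := by
    intro v hv
    induction hv using Submodule.span_induction with
    | mem v hv =>
      obtain ⟨i, hi, rfl⟩ := hv
      cases i with
      | zero =>
        simp only [pow_zero, one_mulVec]
        have hAb : A.mulVec b = A.mulVec (A.mulVec x) := by
          rw [hb, mulVec_add, hls, zero_add]
        have hrb : star r ⬝ᵥ b = star r ⬝ᵥ r := by
          rw [hb, dotProduct_add, hrA, add_zero]
        rw [hAb, hBAAv, hrb, div_self hc, one_smul, hr]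
        abel
      | succ j =>
        have hp : (A ^ (j + 1)).mulVec b = A.mulVec ((A ^ j).mulVec b) := by
          rw [pow_succ', ← mulVec_mulVec]
        rw [hp, hBAAv, hrA, zero_div, zero_smul, sub_zero]
    | zero => simp
    | add u w _ _ hu hw =>
      rw [mulVec_add, mulVec_add, hu, hw, dotProduct_add, add_div, add_smul]
      abel
    | smul a u _ hu =>
      rw [mulVec_smul, mulVec_smul, hu, dotProduct_smul, smul_sub, smul_smul,
        smul_eq_mul, mul_div_assoc]
  have hb' : B.mulVec b = B.mulVec (A.mulVec x) := by
    rw [hb, mulVec_add, hBr, zero_add]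
  rw [hb', key x hx]
end

section
/- Let A ∈ ℂ^{d×d} be Hermitian, b ∈ ℂ^d, and let B be the Moore–Penrose pseudo-inverse of A. If for some t ≥ 1 the vector x belongs to the Krylov subspace K_t(A, b) and A x = b (the residual vanishes), then x = B b. -/
open Matrix

/-- If `x ∈ K_t(A,b)` for a Hermitian `A` and `A x = b`, then `x = A† b`. -/
theorem krylov_solution_is_pseudoinverse {d : ℕ}
    (A B : Matrix (Fin d) (Fin d) ℂ) (b x : Fin d → ℂ) (t : ℕ)
    (ht : 1 ≤ t)
    (hA : A.IsHermitian)
    (hB : IsMoorePenrose A B)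
    (hx : x ∈ Krylov A b t)
    (hsol : A.mulVec x = b) :
    x = B.mulVec b := by
  obtain ⟨hABA, hBAB, hAB, hBA⟩ := hB
  have hAA : B * A * A = A := by
    have h1 : (B * A * A)ᴴ = A := by
      calc (B * A * A)ᴴ = Aᴴ * (B * A)ᴴ := by
            simp [conjTranspose_mul, mul_assoc]
        _ = A * (B * A) := by rw [hBA, hA.eq]
        _ = A := by rw [← mul_assoc, hABA]
    calc B * A * A = ((B * A * A)ᴴ)ᴴ := by rw [conjTranspose_conjTranspose]
      _ = Aᴴ := by rw [h1]
      _ = A := hA.eq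
  have hrange : x ∈ LinearMap.range A.mulVecLin := by
    have hle : Krylov A b t ≤ LinearMap.range A.mulVecLin := by
      apply Submodule.span_le.mpr
      rintro v ⟨i, hi, rfl⟩
      cases i with
      | zero => exact ⟨x, by simpa using hsol⟩
      | succ n =>
        refine ⟨(A ^ n).mulVec b, ?_⟩
        simp [pow_succ', mulVec_mulVec]
    exact hle hx
  obtain ⟨y, hy⟩ := hrange
  have hy' : A.mulVec y = x := hy
  calc x = (B * A * A).mulVec y := by rw [hAA, hy']
    _ = B.mulVec (A.mulVec (A.mulVec y)) := by simp [mulVec_mulVec, mul_assoc]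
    _ = B.mulVec b := by rw [hy', hsol]
end

section
/- Let A ∈ ℂ^{d×d} be complex-symmetric (Aᵀ = A), b ∈ ℂ^d, and let B be the Moore–Penrose pseudo-inverse of A. Suppose x = β·conj(b) + conj(A)·y for some β ∈ ℂ and y ∈ ℂ^d (i.e., x lies in span{conj(b)} + range(conj(A))), that the residual r = b − A x satisfies Aᴴ r = 0 (x is a global least-squares solution), and that r ≠ 0. Then the lifted vector x − (⟨conj(r), x⟩ / ‖conj(r)‖²) · conj(r) equals B b. -/
open Matrix

/-- Lifting for complex-symmetric systems: if `x ∈ span{conj b} + range(conj A)` is a global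
least-squares solution with nonzero residual `r = b - A x`, then the lifted vector
`x - (⟨conj r, x⟩/‖conj r‖²) conj r` equals the pseudo-inverse solution `A† b`. -/
theorem lifting_complex_symmetric {d : ℕ}
    (A B : Matrix (Fin d) (Fin d) ℂ) (b x r : Fin d → ℂ)
    (hA : Aᵀ = A)
    (hB : IsMoorePenrose A B)
    (hx : ∃ (β : ℂ) (y : Fin d → ℂ),
      x = β • star b + (A.map (starRingEnd ℂ)).mulVec y)
    (hr : r = b - A.mulVec x)
    (hls : Aᴴ.mulVec r = 0)
    (hrne : r ≠ 0) :
    x - ((star (star r) ⬝ᵥ x) / (star (star r) ⬝ᵥ star r)) • star r = B.mulVec b := by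
  obtain ⟨β, y, hxy⟩ := hx
  obtain ⟨h1, h2, h3, h4⟩ := hB
  -- A.map conj = Aᴴ
  have hmap : A.map (starRingEnd ℂ) = Aᴴ := by
    rw [conjTranspose, hA]
    rfl
  have hb : b = A.mulVec x + r := by rw [hr]; abel
  -- A *ᵥ star r = 0
  have hAsr : A.mulVec (star r) = 0 := by
    funext i
    have h := congrFun hls i
    rw [← hmap] at h
    have h2 := congrArg star h
    simpa [mulVec, dotProduct, Matrix.map_apply, mul_comm] using h2
  -- B *ᵥ r = 0
  have hABr : (A * B).mulVec r = 0 := by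
    rw [← h3, conjTranspose_mul, ← mulVec_mulVec, hls, mulVec_zero]
  have hBr : B.mulVec r = 0 := by
    calc B.mulVec r = (B * (A * B)).mulVec r := by rw [← mul_assoc, h2]
    _ = 0 := by rw [← mulVec_mulVec, hABr, mulVec_zero]
  set Q := B * A with hQdef
  -- Q *ᵥ star r = 0
  have hQsr : Q.mulVec (star r) = 0 := by
    rw [hQdef, ← mulVec_mulVec, hAsr, mulVec_zero]
  -- Q * Aᴴ = Aᴴ
  have hQAH : Q * Aᴴ = Aᴴ := by
    calc Q * Aᴴ = (B * A)ᴴ * Aᴴ := by rw [h4]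
    _ = Aᴴ * Bᴴ * Aᴴ := by rw [conjTranspose_mul]
    _ = (A * B * A)ᴴ := by simp [conjTranspose_mul, mul_assoc]
    _ = Aᴴ := by rw [h1]
  -- star b = Aᴴ *ᵥ star x + star r
  have hsb : star b = Aᴴ.mulVec (star x) + star r := by
    rw [← hmap, hb]
    funext i
    simp [mulVec, dotProduct, Matrix.map_apply, mul_comm]
  -- Q *ᵥ x = x - β • star r
  have hQx : Q.mulVec x = x - β • star r := by
    have hQsb : Q.mulVec (star b) = star b - star r := by
      rw [hsb, mulVec_add, hQsr, mulVec_mulVec, hQAH]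
      simp
    calc Q.mulVec x = Q.mulVec (β • star b) + Q.mulVec (Aᴴ.mulVec y) := by
          rw [← mulVec_add, ← hmap, ← hxy]
    _ = β • (star b - star r) + Aᴴ.mulVec y := by
          rw [mulVec_smul, hQsb, mulVec_mulVec, hQAH]
    _ = (β • star b + Aᴴ.mulVec y) - β • star r := by
          module
    _ = x - β • star r := by rw [← hmap, ← hxy]
  -- B *ᵥ b = Q *ᵥ x
  have hBb : B.mulVec b = Q.mulVec x := by
    rw [hb, mulVec_add, hBr, add_zero, hQdef, mulVec_mulVec]
  -- r ᵥ* Q = 0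
  have hrQ : r ᵥ* Q = 0 := by
    have : star (Q.mulVec (star r)) = 0 := by rw [hQsr]; simp
    rwa [star_mulVec, star_star, h4] at this
  -- r ⬝ᵥ x = β * (r ⬝ᵥ star r)
  have hc : r ⬝ᵥ x = β * (r ⬝ᵥ star r) := by
    have : x = Q.mulVec x + β • star r := by rw [hQx]; module
    rw [this, dotProduct_add, dotProduct_mulVec, hrQ, zero_dotProduct, zero_add,
      dotProduct_smul, smul_eq_mul]
  have hcne : r ⬝ᵥ star r ≠ 0 := by
    intro h
    apply hrne
    have hsum : ∑ j, Complex.normSq (r j) = 0 := by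
      have h' : ((∑ j, Complex.normSq (r j) : ℝ) : ℂ) = 0 := by
        push_cast
        simpa [dotProduct, Complex.mul_conj] using h
      exact_mod_cast h'
    funext i
    exact Complex.normSq_eq_zero.mp
      ((Finset.sum_eq_zero_iff_of_nonneg (fun j _ => Complex.normSq_nonneg (r j))).mp hsum
        i (Finset.mem_univ i))
  rw [star_star, hBb, hQx, hc, mul_div_assoc, div_self hcne, mul_one]
end

section
/- Let A ∈ ℂ^{d×d} be complex-symmetric (Aᵀ = A), b ∈ ℂ^d, and let B be the Moore–Penrose pseudo-inverse of A. If x = β·conj(b) + conj(A)·y for some β ∈ ℂ and y ∈ ℂ^d (i.e., x lies in span{conj(b)} + range(conj(A))) and A x = b, then x = B b. -/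
open Matrix

lemma map_star_eq_conjTranspose {d : ℕ} (A : Matrix (Fin d) (Fin d) ℂ)
    (hA : Aᵀ = A) : A.map (starRingEnd ℂ) = Aᴴ := by
  rw [conjTranspose, hA]; rfl

/-- For a complex-symmetric `A`, if `x ∈ span{conj b} + range(conj A)` and `A x = b`,
then `x = A† b`. -/
theorem complex_symmetric_solution_is_pseudoinverse {d : ℕ}
    (A B : Matrix (Fin d) (Fin d) ℂ) (b x : Fin d → ℂ)
    (hA : Aᵀ = A)
    (hB : IsMoorePenrose A B)
    (hx : ∃ (β : ℂ) (y : Fin d → ℂ),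
      x = β • star b + (A.map (starRingEnd ℂ)).mulVec y)
    (hsol : A.mulVec x = b) :
    x = B.mulVec b := by
  obtain ⟨β, y, hxy⟩ := hx
  rw [map_star_eq_conjTranspose A hA] at hxy
  obtain ⟨hABA, -, -, hBA⟩ := hB
  -- conj b = Aᴴ (conj x)
  have hcb : star b = Aᴴ.mulVec (star x) := by
    rw [← hsol]
    ext i
    have h : ∀ j, A j i = A i j := fun j => congrFun (congrFun hA i) j
    simp only [Pi.star_apply, mulVec, dotProduct, star_sum, star_mul',
      conjTranspose_apply, h, mul_comm]
  -- x in range of Aᴴ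
  have hx' : x = Aᴴ.mulVec (β • star x + y) := by
    rw [Matrix.mulVec_add, Matrix.mulVec_smul, ← hcb]; exact hxy
  -- B * A * Aᴴ = Aᴴ
  have key : B * A * Aᴴ = Aᴴ := by
    calc B * A * Aᴴ = (B * A)ᴴ * Aᴴ := by rw [hBA]
    _ = (A * (B * A))ᴴ := by rw [conjTranspose_mul A (B * A)]
    _ = Aᴴ := by rw [← mul_assoc, hABA]
  calc x = Aᴴ.mulVec (β • star x + y) := hx'
  _ = (B * A * Aᴴ).mulVec (β • star x + y) := by rw [key]
  _ = B.mulVec (A.mulVec (Aᴴ.mulVec (β • star x + y))) := by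
      simp [Matrix.mulVec_mulVec, Matrix.mul_assoc]
  _ = B.mulVec (A.mulVec x) := by rw [← hx']
  _ = B.mulVec b := by rw [hsol]
end

section
/- Let A ∈ ℂ^{d×d} be Hermitian, S ∈ ℂ^{d×m}, b ∈ ℂ^d, and set M = S Sᴴ, Ã = Sᴴ A S, b̃ = Sᴴ b. Let C ∈ ℂ^{m×d} be the Moore–Penrose pseudo-inverse of S. Then for every t ≥ 1, the Krylov subspace K_t(Ã, b̃) ⊆ ℂ^m equals the image of the Krylov subspace K_t(M A, M b) ⊆ ℂ^d under the linear map v ↦ C v; that is, K_t(Sᴴ A S, Sᴴ b) = C · K_t(M A, M b). -/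
open Matrix

/-- For Hermitian `A` and `M = S Sᴴ`: `K_t(Sᴴ A S, Sᴴ b) = S† · K_t(M A, M b)`. -/
theorem krylov_preconditioned_eq_pinv_image {d m : ℕ}
    (A : Matrix (Fin d) (Fin d) ℂ) (S : Matrix (Fin d) (Fin m) ℂ)
    (C : Matrix (Fin m) (Fin d) ℂ) (b : Fin d → ℂ)
    (hA : A.IsHermitian)
    (hC : IsMoorePenrose S C) :
    ∀ t : ℕ, 1 ≤ t →
      Krylov (Sᴴ * A * S) (Sᴴ.mulVec b) t =
        (Krylov ((S * Sᴴ) * A) ((S * Sᴴ).mulVec b) t).map C.mulVecLin := by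
  intro t _
  have hCS : C * (S * Sᴴ) = Sᴴ := by
    have h4 : (C * S)ᴴ = C * S := hC.2.2.2
    calc C * (S * Sᴴ) = (C * S) * Sᴴ := (Matrix.mul_assoc C S Sᴴ).symm
      _ = (C * S)ᴴ * Sᴴ := by rw [h4]
      _ = (S * (C * S))ᴴ := by rw [← conjTranspose_mul]
      _ = (S * C * S)ᴴ := by rw [← Matrix.mul_assoc]
      _ = Sᴴ := by rw [hC.1]
  have key1 : ∀ i : ℕ, (Sᴴ * A * S) ^ i * Sᴴ = Sᴴ * (A * (S * Sᴴ)) ^ i := by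
    intro i
    induction i with
    | zero => simp
    | succ n ih =>
        rw [pow_succ', pow_succ', Matrix.mul_assoc, ih]
        simp only [Matrix.mul_assoc]
  have key2 : ∀ i : ℕ, (S * Sᴴ * A) ^ i * (S * Sᴴ) = S * Sᴴ * (A * (S * Sᴴ)) ^ i := by
    intro i
    induction i with
    | zero => simp
    | succ n ih =>
        rw [pow_succ', pow_succ', Matrix.mul_assoc, ih]
        simp only [Matrix.mul_assoc]
  have key : ∀ i : ℕ, (Sᴴ * A * S) ^ i * Sᴴ = C * ((S * Sᴴ * A) ^ i * (S * Sᴴ)) := by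
    intro i
    rw [key1, key2, ← Matrix.mul_assoc C (S * Sᴴ) ((A * (S * Sᴴ)) ^ i), hCS]
  rw [Krylov, Krylov, Submodule.map_span]
  congr 1
  ext v
  simp only [Set.mem_image, Set.mem_setOf_eq, mulVecLin_apply]
  constructor
  · rintro ⟨i, hi, rfl⟩
    refine ⟨((S * Sᴴ * A) ^ i).mulVec ((S * Sᴴ).mulVec b), ⟨i, hi, rfl⟩, ?_⟩
    rw [mulVec_mulVec, mulVec_mulVec, mulVec_mulVec, key, Matrix.mul_assoc]
  · rintro ⟨w, ⟨i, hi, rfl⟩, rfl⟩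
    refine ⟨i, hi, ?_⟩
    rw [mulVec_mulVec, mulVec_mulVec, mulVec_mulVec, key, Matrix.mul_assoc]
end

section
/- Let A ∈ ℂ^{d×d} be Hermitian, M ∈ ℂ^{d×d} Hermitian positive semi-definite, b ∈ ℂ^d, and let D be the Moore–Penrose pseudo-inverse of M. Let T ≥ 1 and suppose vectors z_0, z_1, …, z_T ∈ ℂ^d, w_1, …, w_T ∈ ℂ^d, reals β_0, β_1, …, β_T, and scalars α_1, …, α_{T−1} ∈ ℂ satisfy: z_0 = 0, z_1 = b; w_i = M z_i for 1 ≤ i ≤ T; β_0 = β_1 and β_1² = ⟨b, M b⟩; β_i > 0 for 1 ≤ i ≤ T; and for every 1 ≤ i ≤ T−1: α_i = ⟨w_i, A w_i⟩/β_i², z_{i+1} = (1/β_i) A w_i − (α_i/β_i) z_i − (β_i/β_{i−1}) z_{i−1}, β_{i+1} ≥ 0 and β_{i+1}² = ⟨z_{i+1}, M z_{i+1}⟩. Then for every 1 ≤ t ≤ T: span_ℂ{w_1, …, w_t} = K_t(M A, M b), and the image of span_ℂ{z_1, …, z_t} under the linear map v ↦ M D v equals the image of K_t(A M, b) under v ↦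 M D v. -/
open Matrix
open scoped ComplexOrder

lemma krylov_mono {d : ℕ} (A : Matrix (Fin d) (Fin d) ℂ) (b : Fin d → ℂ) {s t : ℕ}
    (h : s ≤ t) : Krylov A b s ≤ Krylov A b t :=
  Submodule.span_mono (fun _ ⟨i, hi, hv⟩ => ⟨i, lt_of_lt_of_le hi h, hv⟩)

lemma krylov_gen_mem {d : ℕ} (A : Matrix (Fin d) (Fin d) ℂ) (b : Fin d → ℂ) {i t : ℕ}
    (h : i < t) : (A ^ i).mulVec b ∈ Krylov A b t :=
  Submodule.subset_span ⟨i, h, rfl⟩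

lemma krylov_mulVec_mem {d : ℕ} (A : Matrix (Fin d) (Fin d) ℂ) (b : Fin d → ℂ) {t : ℕ}
    {x : Fin d → ℂ} (hx : x ∈ Krylov A b t) :
    A.mulVec x ∈ Krylov A b (t + 1) := by
  have h : Krylov A b t ≤ (Krylov A b (t + 1)).comap A.mulVecLin := by
    rw [Krylov, Submodule.span_le]
    rintro v ⟨i, hi, rfl⟩
    simp only [SetLike.mem_coe, Submodule.mem_comap, mulVecLin_apply]
    rw [mulVec_mulVec, ← pow_succ']
    exact krylov_gen_mem _ _ (Nat.succ_lt_succ hi)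
  exact h hx

/-- Properties of the vectors `zᵢ` and `wᵢ` generated by the preconditioned Lanczos process:
the `wᵢ` span `K_t(M A, M b)`, and the `zᵢ` span `K_t(A M, b)` up to the projection `M M†`. -/
theorem preconditioned_lanczos_spans {d : ℕ}
    (A M D : Matrix (Fin d) (Fin d) ℂ) (b : Fin d → ℂ)
    (hA : A.IsHermitian)
    (hM : M.PosSemidef)
    (hD : IsMoorePenrose M D)
    (T : ℕ) (hT : 1 ≤ T)
    (z : ℕ → (Fin d → ℂ)) (w : ℕ → (Fin d → ℂ)) (β : ℕ → ℝ) (α : ℕ → ℂ)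
    (hz0 : z 0 = 0) (hz1 : z 1 = b)
    (hw : ∀ i, 1 ≤ i → i ≤ T → w i = M.mulVec (z i))
    (hβ0 : β 0 = β 1)
    (hβ1 : ((β 1 : ℂ)) ^ 2 = star b ⬝ᵥ M.mulVec b)
    (hβpos : ∀ i, 1 ≤ i → i ≤ T → 0 < β i)
    (hα : ∀ i, 1 ≤ i → i + 1 ≤ T →
      α i = (star (w i) ⬝ᵥ A.mulVec (w i)) / ((β i : ℂ)) ^ 2)
    (hrec : ∀ i, 1 ≤ i → i + 1 ≤ T →
      z (i + 1) = ((β i : ℂ))⁻¹ • A.mulVec (w i)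
        - (α i / ((β i : ℂ))) • z i
        - (((β i : ℝ) / (β (i - 1)) : ℝ) : ℂ) • z (i - 1))
    (hβnext : ∀ i, 1 ≤ i → i + 1 ≤ T →
      0 ≤ β (i + 1) ∧ ((β (i + 1) : ℂ)) ^ 2 = star (z (i + 1)) ⬝ᵥ M.mulVec (z (i + 1))) :
    ∀ t, 1 ≤ t → t ≤ T →
      Submodule.span ℂ {v | ∃ i, 1 ≤ i ∧ i ≤ t ∧ v = w i}
          = Krylov (M * A) (M.mulVec b) t ∧
        (Submodule.span ℂ {v | ∃ i, 1 ≤ i ∧ i ≤ t ∧ v = z i}).map (M * D).mulVecLin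
          = (Krylov (A * M) b t).map (M * D).mulVecLin := by
  have hβC : ∀ i, 1 ≤ i → i ≤ T → (β i : ℂ) ≠ 0 := fun i h1 h2 =>
    Complex.ofReal_ne_zero.2 (ne_of_gt (hβpos i h1 h2))
  -- the key three-term recurrence for the `w i`
  have hwrec : ∀ j, 1 ≤ j → j + 1 ≤ T →
      (M * A).mulVec (w j) = (β j : ℂ) • w (j + 1) + (α j) • w j
        + ((β j : ℂ) * (((β j / β (j - 1) : ℝ)) : ℂ)) • M.mulVec (z (j - 1)) := by
    intro j h1 h2
    have hb := hβC j h1 (by omega)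
    rw [hw (j + 1) (by omega) h2, hrec j h1 h2, mulVec_sub, mulVec_sub, mulVec_smul,
      mulVec_smul, mulVec_smul, mulVec_mulVec, ← hw j h1 (by omega)]
    match_scalars <;> field_simp <;> ring
  -- part 1 : spans of w's are Krylov spaces of M*A
  have hspan : ∀ t, 1 ≤ t → t ≤ T →
      Submodule.span ℂ {v | ∃ i, 1 ≤ i ∧ i ≤ t ∧ v = w i}
        = Krylov (M * A) (M.mulVec b) t := by
    intro t
    induction t with
    | zero => omega
    | succ t ih =>
      intro _ htT
      rcases Nat.eq_zero_or_pos t with rfl | ht1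
      · -- base case
        have hw1 : w 1 = M.mulVec b := by rw [hw 1 le_rfl hT, hz1]
        have hs1 : {v | ∃ i, 1 ≤ i ∧ i ≤ 0 + 1 ∧ v = w i} = {M.mulVec b} := by
          ext v
          simp only [Set.mem_setOf_eq, Set.mem_singleton_iff]
          constructor
          · rintro ⟨i, hi1, hi2, rfl⟩
            have : i = 1 := by omega
            rw [this, hw1]
          · rintro rfl; exact ⟨1, le_rfl, le_rfl, hw1.symm⟩
        have hk1 : {v | ∃ i < 0 + 1, v = ((M * A) ^ i).mulVec (M.mulVec b)}
            = {M.mulVec b} := by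
          ext v
          simp only [Set.mem_setOf_eq, Set.mem_singleton_iff]
          constructor
          · rintro ⟨i, hi, rfl⟩
            have : i = 0 := by omega
            rw [this, pow_zero, one_mulVec]
          · rintro rfl; exact ⟨0, by omega, by rw [pow_zero, one_mulVec]⟩
        rw [Krylov, hs1, hk1]
      · have htT' : t ≤ T := by omega
        have hIH := ih ht1 htT'
        apply le_antisymm
        · rw [Submodule.span_le]
          rintro v ⟨i, hi1, hi2, rfl⟩
          by_cases hit : i ≤ t
          · exact krylov_mono _ _ (Nat.le_succ t)
              (hIH ▸ Submodule.subset_span ⟨i, hi1, hit, rfl⟩)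
          · have hieq : i = t + 1 := by omega
            subst hieq
            have hwt1 : w (t + 1) = ((β t : ℂ))⁻¹ • (M * A).mulVec (w t)
                - (α t / ((β t : ℂ))) • w t
                - (((β t / β (t - 1) : ℝ)) : ℂ) • M.mulVec (z (t - 1)) := by
              rw [hw (t + 1) (by omega) htT, hrec t ht1 htT, mulVec_sub, mulVec_sub,
                mulVec_smul, mulVec_smul, mulVec_smul, mulVec_mulVec, ← hw t ht1 htT']
            have h1 : w t ∈ Krylov (M * A) (M.mulVec b) (t + 1) :=
              krylov_mono _ _ (Nat.le_succ t)
                (hIH ▸ Submodule.subset_span ⟨t, ht1, le_rfl, rfl⟩)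
            have h2 : (M * A).mulVec (w t) ∈ Krylov (M * A) (M.mulVec b) (t + 1) :=
              krylov_mulVec_mem _ _ (hIH ▸ Submodule.subset_span ⟨t, ht1, le_rfl, rfl⟩)
            have h3 : M.mulVec (z (t - 1)) ∈ Krylov (M * A) (M.mulVec b) (t + 1) := by
              rcases Nat.eq_or_lt_of_le ht1 with h | h
              · rw [← h]
                simp [hz0, mulVec_zero]
              · rw [← hw (t - 1) (by omega) (by omega)]
                exact krylov_mono _ _ (Nat.le_succ t)
                  (hIH ▸ Submodule.subset_span ⟨t - 1, by omega, by omega, rfl⟩)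
            rw [hwt1]
            exact sub_mem (sub_mem (Submodule.smul_mem _ _ h2) (Submodule.smul_mem _ _ h1))
              (Submodule.smul_mem _ _ h3)
        · rw [Krylov, Submodule.span_le]
          rintro v ⟨i, hi, rfl⟩
          by_cases hit : i < t
          · refine Submodule.span_mono ?_ (hIH ▸ krylov_gen_mem _ _ hit)
            rintro x ⟨j, hj1, hj2, hv⟩
            exact ⟨j, hj1, by omega, hv⟩
          · have hieq : i = t := by omega
            rw [hieq]
            -- (M*A)^t ∘ Mb = (M*A) applied to a vector of K_t = span of w's
            have hmap : Submodule.span ℂ {v | ∃ j, 1 ≤ j ∧ j ≤ t ∧ v = w j}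
                ≤ (Submodule.span ℂ {v | ∃ j, 1 ≤ j ∧ j ≤ t + 1 ∧ v = w j}).comap
                  (M * A).mulVecLin := by
              rw [Submodule.span_le]
              rintro v ⟨j, hj1, hj2, rfl⟩
              simp only [SetLike.mem_coe, Submodule.mem_comap, mulVecLin_apply]
              rw [hwrec j hj1 (by omega)]
              have m1 : w (j + 1) ∈ Submodule.span ℂ
                  {v | ∃ j, 1 ≤ j ∧ j ≤ t + 1 ∧ v = w j} :=
                Submodule.subset_span ⟨j + 1, by omega, by omega, rfl⟩
              have m2 : w j ∈ Submodule.span ℂ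
                  {v | ∃ j, 1 ≤ j ∧ j ≤ t + 1 ∧ v = w j} :=
                Submodule.subset_span ⟨j, hj1, by omega, rfl⟩
              have m3 : M.mulVec (z (j - 1)) ∈ Submodule.span ℂ
                  {v | ∃ j, 1 ≤ j ∧ j ≤ t + 1 ∧ v = w j} := by
                rcases Nat.eq_or_lt_of_le hj1 with h | h
                · rw [← h]
                  simp [hz0, mulVec_zero]
                · rw [← hw (j - 1) (by omega) (by omega)]
                  exact Submodule.subset_span ⟨j - 1, by omega, by omega, rfl⟩
              exact add_mem (add_mem (Submodule.smul_mem _ _ m1) (Submodule.smul_mem _ _ m2))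
                (Submodule.smul_mem _ _ m3)
            have hx : ((M * A) ^ (t - 1)).mulVec (M.mulVec b) ∈
                Submodule.span ℂ {v | ∃ j, 1 ≤ j ∧ j ≤ t ∧ v = w j} :=
              hIH ▸ krylov_gen_mem _ _ (by omega)
            have := hmap hx
            simp only [Submodule.mem_comap, mulVecLin_apply] at this
            rw [mulVec_mulVec, ← pow_succ'] at this
            have ht' : t - 1 + 1 = t := by omega
            rwa [ht'] at this
  intro t ht1 htT
  refine ⟨hspan t ht1 htT, ?_⟩
  -- part 2
  have hMD : M * D = Dᴴ * M := by
    have h := hD.2.2.1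
    calc M * D = (M * D)ᴴ := h.symm
      _ = Dᴴ * Mᴴ := by rw [conjTranspose_mul]
      _ = Dᴴ * M := by rw [hM.1]
  have hsemi : ∀ i : ℕ, M * (A * M) ^ i = (M * A) ^ i * M := by
    intro i
    have h : SemiconjBy M (A * M) (M * A) := (mul_assoc M A M).symm
    exact h.pow_right i
  have hfin : (Submodule.span ℂ {v | ∃ i, 1 ≤ i ∧ i ≤ t ∧ v = z i}).map M.mulVecLin
      = (Krylov (A * M) b t).map M.mulVecLin := by
    have e1 : M.mulVecLin '' {v | ∃ i, 1 ≤ i ∧ i ≤ t ∧ v = z i}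
        = {v | ∃ i, 1 ≤ i ∧ i ≤ t ∧ v = w i} := by
      ext v
      simp only [Set.mem_image, Set.mem_setOf_eq, mulVecLin_apply]
      constructor
      · rintro ⟨x, ⟨i, h1, h2, rfl⟩, rfl⟩
        exact ⟨i, h1, h2, (hw i h1 (h2.trans htT)).symm⟩
      · rintro ⟨i, h1, h2, rfl⟩
        exact ⟨z i, ⟨i, h1, h2, rfl⟩, (hw i h1 (h2.trans htT)).symm⟩
    have e2 : M.mulVecLin '' {v | ∃ i < t, v = ((A * M) ^ i).mulVec b}
        = {v | ∃ i < t, v = ((M * A) ^ i).mulVec (M.mulVec b)} := by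
      ext v
      simp only [Set.mem_image, Set.mem_setOf_eq, mulVecLin_apply]
      constructor
      · rintro ⟨x, ⟨i, hi, rfl⟩, rfl⟩
        exact ⟨i, hi, by rw [mulVec_mulVec, hsemi, ← mulVec_mulVec]⟩
      · rintro ⟨i, hi, rfl⟩
        exact ⟨((A * M) ^ i).mulVec b, ⟨i, hi, rfl⟩,
          by rw [mulVec_mulVec, hsemi, ← mulVec_mulVec]⟩
    rw [Krylov, Submodule.map_span, Submodule.map_span, e1, e2, ← Krylov,
      ← hspan t ht1 htT]
  rw [hMD, mulVecLin_mul, Submodule.map_comp, Submodule.map_comp, hfin]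
end

section
/- Let A ∈ ℂ^{d×d} be Hermitian, S ∈ ℂ^{d×m}, and set M = S Sᴴ and Ã = Sᴴ A S. Suppose the column space of M equals the column space of A. Let B be the Moore–Penrose pseudo-inverse of A and B̃ the Moore–Penrose pseudo-inverse of Ã. Then for every b ∈ ℂ^d: (i) Sᴴ b lies in the column space of Ã, and (ii) S B̃ Sᴴ b = B b; i.e., the preconditioned solution recovers the pseudo-inverse solution A† b of the original problem. -/
open Matrix

open ComplexOrder in
private lemma aux_zero {n k : ℕ} (C : Matrix (Fin k) (Fin n) ℂ) (v : Fin n → ℂ)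
    (t : Fin k → ℂ) (hv : Cᴴ.mulVec t = v) (h0 : C.mulVec v = 0) : v = 0 := by
  have hsv : star v = star t ᵥ* C := by
    rw [← hv, star_mulVec, conjTranspose_conjTranspose]
  have h : star v ⬝ᵥ v = 0 := by
    rw [hsv, ← dotProduct_mulVec, h0, dotProduct_zero]
  exact dotProduct_star_self_eq_zero.mp h

private lemma matrix_eq_of_mulVec {n k : ℕ} {M N : Matrix (Fin k) (Fin n) ℂ}
    (h : ∀ v, M.mulVec v = N.mulVec v) : M = N := by
  ext i j
  have := congrFun (h (Pi.single j 1)) i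
  simpa [mulVec_single] using this

/-- If `range (S Sᴴ) = range A` for Hermitian `A`, then `Sᴴ b ∈ range (Sᴴ A S)` and the
preconditioned pseudo-inverse solution recovers `A† b`. -/
theorem preconditioned_recovers_pseudoinverse {d m : ℕ}
    (A B : Matrix (Fin d) (Fin d) ℂ) (S : Matrix (Fin d) (Fin m) ℂ)
    (Bt : Matrix (Fin m) (Fin m) ℂ)
    (hA : A.IsHermitian)
    (hrange : LinearMap.range (S * Sᴴ).mulVecLin = LinearMap.range A.mulVecLin)
    (hB : IsMoorePenrose A B)
    (hBt : IsMoorePenrose (Sᴴ * A * S) Bt) :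
    ∀ b : Fin d → ℂ,
      Sᴴ.mulVec b ∈ LinearMap.range (Sᴴ * A * S).mulVecLin ∧
        S.mulVec (Bt.mulVec (Sᴴ.mulVec b)) = B.mulVec b := by
  obtain ⟨h1, h2, h3, h4⟩ := hB
  obtain ⟨g1, g2, g3, g4⟩ := hBt
  have hAH : Aᴴ = A := hA
  have hAt : (Sᴴ * A * S)ᴴ = Sᴴ * A * S := by
    rw [conjTranspose_mul, conjTranspose_mul, conjTranspose_conjTranspose, hAH,
      Matrix.mul_assoc]
  -- membership transfer between ranges
  have hmem : ∀ v : Fin d → ℂ, (∃ y, (S * Sᴴ).mulVec y = v) ↔ ∃ y, A.mulVec y = v := by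
    intro v
    constructor
    · rintro ⟨y, hy⟩
      have : v ∈ LinearMap.range A.mulVecLin := by
        rw [← hrange]; exact ⟨y, hy⟩
      obtain ⟨z, hz⟩ := this
      exact ⟨z, hz⟩
    · rintro ⟨y, hy⟩
      have : v ∈ LinearMap.range (S * Sᴴ).mulVecLin := by
        rw [hrange]; exact ⟨y, hy⟩
      obtain ⟨z, hz⟩ := this
      exact ⟨z, hz⟩
  -- kernel fact: SSᴴ y = 0 → Sᴴ y = 0
  have hker : ∀ y : Fin d → ℂ, (S * Sᴴ).mulVec y = 0 → Sᴴ.mulVec y = 0 := by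
    intro y hy
    refine aux_zero S _ y rfl ?_
    rw [mulVec_mulVec]; exact hy
  -- AB * SSᴴ = SSᴴ
  have hM1 : (A * B) * (S * Sᴴ) = S * Sᴴ := by
    apply matrix_eq_of_mulVec
    intro v
    obtain ⟨w, hw⟩ := (hmem ((S * Sᴴ).mulVec v)).mp ⟨v, rfl⟩
    conv_lhs => rw [← mulVec_mulVec]
    rw [← hw, mulVec_mulVec, h1]
  -- SSᴴ * AB = SSᴴ
  have hM2 : (S * Sᴴ) * (A * B) = S * Sᴴ := by
    have := congrArg conjTranspose hM1
    rwa [conjTranspose_mul, h3, conjTranspose_mul, conjTranspose_conjTranspose] at this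
  intro b
  -- Sᴴ (A B b) = Sᴴ b
  have hS4 : Sᴴ.mulVec (A.mulVec (B.mulVec b)) = Sᴴ.mulVec b := by
    have h0 : (S * Sᴴ).mulVec (A.mulVec (B.mulVec b) - b) = 0 := by
      rw [mulVec_sub]
      simp only [mulVec_mulVec]
      rw [hM2]
      exact sub_self _
    have := hker _ h0
    rw [mulVec_sub, sub_eq_zero] at this
    exact this
  -- B b ∈ range A
  have hBbA : ∃ z, A.mulVec z = B.mulVec b := by
    refine ⟨Bᴴ.mulVec (B.mulVec b), ?_⟩
    have hBA : B * A = A * Bᴴ := by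
      rw [← h4, conjTranspose_mul, hAH]
    simp only [mulVec_mulVec]
    rw [← Matrix.mul_assoc, ← hBA, h2]
  -- B b = S Sᴴ u
  obtain ⟨u, hu⟩ : ∃ u, (S * Sᴴ).mulVec u = B.mulVec b := (hmem _).mpr hBbA
  -- claim (i): witness Sᴴ u
  have hc : (Sᴴ * A * S).mulVec (Sᴴ.mulVec u) = Sᴴ.mulVec b := by
    have e1 : (Sᴴ * A * S).mulVec (Sᴴ.mulVec u)
        = Sᴴ.mulVec (A.mulVec ((S * Sᴴ).mulVec u)) := by
      simp only [mulVec_mulVec, Matrix.mul_assoc]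
    rw [e1, hu]
    exact hS4
  refine ⟨⟨Sᴴ.mulVec u, ?_⟩, ?_⟩
  · show (Sᴴ * A * S).mulVec (Sᴴ.mulVec u) = Sᴴ.mulVec b
    exact hc
  -- claim (ii)
  set x := S.mulVec (Bt.mulVec (Sᴴ.mulVec b)) with hx
  -- Sᴴ A x = Sᴴ b
  have hSAx : Sᴴ.mulVec (A.mulVec x) = Sᴴ.mulVec b := by
    rw [hx]
    have e1 : Sᴴ.mulVec (A.mulVec (S.mulVec (Bt.mulVec (Sᴴ.mulVec b))))
        = Sᴴ.mulVec (A.mulVec (S.mulVec (Bt.mulVec ((Sᴴ * A * S).mulVec (Sᴴ.mulVec u))))) := by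
      rw [hc]
    have e2 : Sᴴ.mulVec (A.mulVec (S.mulVec (Bt.mulVec ((Sᴴ * A * S).mulVec (Sᴴ.mulVec u)))))
        = (Sᴴ * A * S * Bt * (Sᴴ * A * S)).mulVec (Sᴴ.mulVec u) := by
      simp only [mulVec_mulVec, Matrix.mul_assoc]
    rw [e1, e2, g1, hc]
  -- x ∈ range A
  have hBtA : Bt * (Sᴴ * A * S) = (Sᴴ * A * S) * Btᴴ := by
    rw [← g4, conjTranspose_mul, hAt]
  have hxA : ∃ z, A.mulVec z = x := by
    apply (hmem x).mp
    refine ⟨A.mulVec (S.mulVec (Btᴴ.mulVec (Bt.mulVec (Sᴴ.mulVec b)))), ?_⟩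
    have e3 : (Bt * (Sᴴ * A * S)).mulVec (Bt.mulVec (Sᴴ.mulVec b))
        = Bt.mulVec (Sᴴ.mulVec b) := by
      rw [mulVec_mulVec, g2]
    have key : Bt.mulVec (Sᴴ.mulVec b)
        = (Sᴴ * A * S).mulVec (Btᴴ.mulVec (Bt.mulVec (Sᴴ.mulVec b))) := by
      conv_lhs => rw [← e3, hBtA]
      rw [← mulVec_mulVec]
    rw [hx]
    conv_rhs => rw [key]
    simp only [mulVec_mulVec, Matrix.mul_assoc]
  obtain ⟨z, hz⟩ := hxA
  -- Sᴴ A (x - B b) = 0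
  have hw0 : Sᴴ.mulVec (A.mulVec (x - B.mulVec b)) = 0 := by
    rw [mulVec_sub, mulVec_sub, hSAx, hS4, sub_self]
  -- A (x - B b) = 0
  have hAw : A.mulVec (x - B.mulVec b) = 0 := by
    obtain ⟨r, hr⟩ := (hmem (A.mulVec (x - B.mulVec b))).mpr ⟨x - B.mulVec b, rfl⟩
    refine aux_zero Sᴴ _ (Sᴴ.mulVec r) ?_ hw0
    rw [conjTranspose_conjTranspose, mulVec_mulVec]
    exact hr
  -- x - B b ∈ range A, hence zero
  obtain ⟨z2, hz2⟩ := hBbA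
  have hs : A.mulVec (z - z2) = x - B.mulVec b := by
    rw [mulVec_sub, hz, hz2]
  have hfin : x - B.mulVec b = 0 := by
    refine aux_zero A _ (z - z2) ?_ hAw
    rw [hAH]
    exact hs
  exact sub_eq_zero.mp hfin
end

section
/- Let A ∈ ℂ^{d×d} be complex-symmetric (Aᵀ = A), S ∈ ℂ^{d×m}, b ∈ ℂ^d, and set M = S Sᴴ, Ã = Sᵀ A S, b̃ = Sᵀ b. Then for every t ≥ 1 the Saunders subspace S_t(Ã, b̃) ⊆ ℂ^m equals the image of the Saunders subspace S_t(A M, b) ⊆ ℂ^d under the linear map v ↦ Sᵀ v; that is, K_{⌈t/2⌉}(Ã·conj(Ã), b̃) + K_{⌊t/2⌋}(Ã·conj(Ã), Ã·conj(b̃)) = Sᵀ · ( K_{⌈t/2⌉}(A M·conj(A M), b) + K_{⌊t/2⌋}(A M·conj(A M), A M·conj(b)) ). -/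
open Matrix

/-- The Saunders subspace `S_t(C, c) = K_{⌈t/2⌉}(C conj(C), c) + K_{⌊t/2⌋}(C conj(C), C conj(c))`. -/
noncomputable def Saunders {n : Type*} [Fintype n] [DecidableEq n]
    (C : Matrix n n ℂ) (c : n → ℂ) (t : ℕ) : Submodule ℂ (n → ℂ) :=
  Krylov (C * C.map (starRingEnd ℂ)) c ((t + 1) / 2) ⊔
    Krylov (C * C.map (starRingEnd ℂ)) (C.mulVec (star c)) (t / 2)

lemma krylov_map {m d : ℕ} (B : Matrix (Fin m) (Fin m) ℂ) (C : Matrix (Fin d) (Fin d) ℂ)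
    (P : Matrix (Fin m) (Fin d) ℂ) (h : B * P = P * C) (b : Fin d → ℂ) (t : ℕ) :
    Krylov B (P.mulVec b) t = (Krylov C b t).map P.mulVecLin := by
  have hpow : ∀ i : ℕ, B ^ i * P = P * C ^ i := by
    intro i
    induction i with
    | zero => simp
    | succ n ih =>
      rw [pow_succ, pow_succ, Matrix.mul_assoc, h, ← Matrix.mul_assoc, ih, Matrix.mul_assoc]
  unfold Krylov
  rw [Submodule.map_span]
  congr 1
  ext v
  simp only [Set.mem_image, Set.mem_setOf_eq, Matrix.mulVecLin_apply]
  constructor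
  · rintro ⟨i, hi, rfl⟩
    exact ⟨(C ^ i).mulVec b, ⟨i, hi, rfl⟩, by
      simp only [Matrix.mulVec_mulVec]; rw [hpow]⟩
  · rintro ⟨w, ⟨i, hi, rfl⟩, rfl⟩
    exact ⟨i, hi, by simp only [Matrix.mulVec_mulVec]; rw [hpow]⟩

/-- For complex-symmetric `A` and `M = S Sᴴ`:
`S_t(Sᵀ A S, Sᵀ b) = Sᵀ · S_t(A M, b)`. -/
theorem saunders_preconditioned_eq_image {d m : ℕ}
    (A : Matrix (Fin d) (Fin d) ℂ) (S : Matrix (Fin d) (Fin m) ℂ) (b : Fin d → ℂ)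
    (hA : Aᵀ = A) :
    ∀ t : ℕ, 1 ≤ t →
      Saunders (Sᵀ * A * S) (Sᵀ.mulVec b) t =
        (Saunders (A * (S * Sᴴ)) b t).map Sᵀ.mulVecLin := by
  intro t _
  set c := starRingEnd ℂ
  have hSH : Sᴴ = Sᵀ.map c := rfl
  have hmap : ∀ {k l p : ℕ} (X : Matrix (Fin k) (Fin l) ℂ) (Y : Matrix (Fin l) (Fin p) ℂ),
      (X * Y).map c = X.map c * Y.map c := fun X Y => Matrix.map_mul
  have hSS : (Sᵀ.map c).map c = Sᵀ := by
    rw [Matrix.map_map]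
    convert Matrix.map_id Sᵀ
    ext x
    simp [c]
  have hkey : (Sᵀ * A * S) * (Sᵀ * A * S).map c * Sᵀ =
      Sᵀ * ((A * (S * Sᴴ)) * (A * (S * Sᴴ)).map c) := by
    simp only [hmap, hSH, hSS, Matrix.mul_assoc]
  unfold Saunders
  rw [Submodule.map_sup]
  congr 1
  · exact krylov_map _ _ _ hkey b _
  · have hvec : (Sᵀ * A * S).mulVec (star (Sᵀ.mulVec b)) =
        Sᵀ.mulVec ((A * (S * Sᴴ)).mulVec (star b)) := by
      have hstar : star (Sᵀ.mulVec b) = (Sᵀ.map c).mulVec (star b) := by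
        ext j
        simp [Matrix.mulVec, dotProduct, c, Pi.star_apply, map_sum, mul_comm]
      rw [hstar, Matrix.mulVec_mulVec, Matrix.mulVec_mulVec]
      congr 1
      simp only [hSH, Matrix.mul_assoc]
    rw [hvec]
    exact krylov_map _ _ _ hkey _ _
end

section
/- Let A ∈ ℂ^{d×d} be complex-symmetric (Aᵀ = A), S ∈ ℂ^{d×m}, and set M = S Sᴴ and Ã = Sᵀ A S. Suppose the column space of conj(M) equals the column space of A. Let B be the Moore–Penrose pseudo-inverse of A and B̃ the Moore–Penrose pseudo-inverse of Ã. Then for every b ∈ ℂ^d: (i) Sᵀ b lies in the column space of Ã, and (ii) S B̃ Sᵀ b = B b; i.e., the preconditioned solution recovers the pseudo-inverse solution A† b of the original problem. -/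
open Matrix

section Aux

open Matrix

lemma mp_unique {n m : Type*} [Fintype n] [Fintype m]
    {A : Matrix n m ℂ} {B1 B2 : Matrix m n ℂ}
    (h1 : IsMoorePenrose A B1) (h2 : IsMoorePenrose A B2) : B1 = B2 := by
  obtain ⟨p1, q1, r1, s1⟩ := h1
  obtain ⟨p2, q2, r2, s2⟩ := h2
  have hAB : A * B1 = A * B2 := by
    calc A * B1 = (A * B1)ᴴ := r1.symm
      _ = B1ᴴ * Aᴴ := conjTranspose_mul _ _
      _ = B1ᴴ * (A * B2 * A)ᴴ := by rw [p2]
      _ = B1ᴴ * (Aᴴ * (A * B2)ᴴ) := by rw [conjTranspose_mul]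
      _ = B1ᴴ * (Aᴴ * (A * B2)) := by rw [r2]
      _ = (B1ᴴ * Aᴴ) * (A * B2) := (Matrix.mul_assoc _ _ _).symm
      _ = (A * B1)ᴴ * (A * B2) := by rw [conjTranspose_mul]
      _ = (A * B1) * (A * B2) := by rw [r1]
      _ = (A * B1 * A) * B2 := by simp only [Matrix.mul_assoc]
      _ = A * B2 := by rw [p1]
  have hBA : B1 * A = B2 * A := by
    have p2' : A * (B2 * A) = A := by rw [← Matrix.mul_assoc]; exact p2
    calc B1 * A = (B1 * A)ᴴ := s1.symm
      _ = Aᴴ * B1ᴴ := conjTranspose_mul _ _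
      _ = (A * (B2 * A))ᴴ * B1ᴴ := by rw [p2']
      _ = ((B2 * A)ᴴ * Aᴴ) * B1ᴴ := by rw [conjTranspose_mul]
      _ = ((B2 * A) * Aᴴ) * B1ᴴ := by rw [s2]
      _ = (B2 * A) * (Aᴴ * B1ᴴ) := Matrix.mul_assoc _ _ _
      _ = (B2 * A) * (B1 * A)ᴴ := by rw [conjTranspose_mul]
      _ = (B2 * A) * (B1 * A) := by rw [s1]
      _ = B2 * (A * B1 * A) := by simp only [Matrix.mul_assoc]
      _ = B2 * A := by rw [p1]
  calc B1 = B1 * A * B1 := q1.symm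
    _ = B2 * A * B1 := by rw [hBA]
    _ = B2 * (A * B1) := Matrix.mul_assoc _ _ _
    _ = B2 * (A * B2) := by rw [hAB]
    _ = B2 * A * B2 := (Matrix.mul_assoc _ _ _).symm
    _ = B2 := q2

lemma transpose_conjT {n m : Type*} (M : Matrix n m ℂ) : (Mᵀ)ᴴ = (Mᴴ)ᵀ := by
  ext i j
  simp [conjTranspose_apply]

lemma mp_transpose {n m : Type*} [Fintype n] [Fintype m]
    {A : Matrix n m ℂ} {B : Matrix m n ℂ}
    (h : IsMoorePenrose A B) : IsMoorePenrose Aᵀ Bᵀ := by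
  obtain ⟨p, q, r, s⟩ := h
  refine ⟨?_, ?_, ?_, ?_⟩
  · calc Aᵀ * Bᵀ * Aᵀ = (A * (B * A))ᵀ := by rw [transpose_mul, transpose_mul]
      _ = (A * B * A)ᵀ := by rw [← Matrix.mul_assoc]
      _ = Aᵀ := by rw [p]
  · calc Bᵀ * Aᵀ * Bᵀ = (B * (A * B))ᵀ := by rw [transpose_mul, transpose_mul]
      _ = (B * A * B)ᵀ := by rw [← Matrix.mul_assoc]
      _ = Bᵀ := by rw [q]
  · have h1 : Aᵀ * Bᵀ = (B * A)ᵀ := (transpose_mul B A).symm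
    rw [h1, transpose_conjT, s]
  · have h1 : Bᵀ * Aᵀ = (A * B)ᵀ := (transpose_mul A B).symm
    rw [h1, transpose_conjT, r]

lemma mapc_mulVec {n m : Type*} [Fintype m] (M : Matrix n m ℂ) (v : m → ℂ) :
    (M.map (starRingEnd ℂ)).mulVec v = star (M.mulVec (star v)) := by
  funext i
  simp only [Matrix.mulVec, dotProduct, Matrix.map_apply, Pi.star_apply, star_sum,
    star_mul', star_star, starRingEnd_apply]

open ComplexOrder in
lemma range_self_mul_conjT {d k : ℕ} (N : Matrix (Fin d) (Fin k) ℂ) :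
    LinearMap.range (N * Nᴴ).mulVecLin = LinearMap.range N.mulVecLin := by
  apply Submodule.eq_of_le_of_finrank_eq
  · rintro x ⟨v, rfl⟩
    exact ⟨Nᴴ.mulVec v, by simp [Matrix.mulVecLin_apply, Matrix.mulVec_mulVec]⟩
  · exact rank_self_mul_conjTranspose N

lemma exists_right_factor {n p q : ℕ} (M : Matrix (Fin n) (Fin p) ℂ)
    (F : Matrix (Fin n) (Fin q) ℂ)
    (h : ∀ v, M.mulVec v ∈ LinearMap.range F.mulVecLin) :
    ∃ U : Matrix (Fin q) (Fin p) ℂ, M = F * U := by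
  have h' : ∀ j : Fin p, ∃ y : Fin q → ℂ, F.mulVec y = M.mulVec (Pi.single j 1) :=
    fun j => h (Pi.single j 1)
  choose u hu using h'
  refine ⟨Matrix.of (fun k j => u j k), ?_⟩
  ext i j
  have := congrFun (hu j) i
  simp only [Matrix.mulVec_single_one] at this
  calc M i j = Mᵀ j i := rfl
    _ = F.mulVec (u j) i := this.symm
    _ = (F * Matrix.of (fun k j => u j k)) i j := by
        simp [Matrix.mul_apply, Matrix.mulVec, dotProduct]

end Aux

set_option maxHeartbeats 1000000 in
/-- If `range (conj (S Sᴴ)) = range A` for complex-symmetric `A`, then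
`Sᵀ b ∈ range (Sᵀ A S)` and the preconditioned pseudo-inverse solution recovers `A† b`. -/
theorem preconditioned_recovers_pseudoinverse_complex_symmetric {d m : ℕ}
    (A B : Matrix (Fin d) (Fin d) ℂ) (S : Matrix (Fin d) (Fin m) ℂ)
    (Bt : Matrix (Fin m) (Fin m) ℂ)
    (hA : Aᵀ = A)
    (hrange : LinearMap.range ((S * Sᴴ).map (starRingEnd ℂ)).mulVecLin
      = LinearMap.range A.mulVecLin)
    (hB : IsMoorePenrose A B)
    (hBt : IsMoorePenrose (Sᵀ * A * S) Bt) :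
    ∀ b : Fin d → ℂ,
      Sᵀ.mulVec b ∈ LinearMap.range (Sᵀ * A * S).mulVecLin ∧
        S.mulVec (Bt.mulVec (Sᵀ.mulVec b)) = B.mulVec b := by
  classical
  obtain ⟨Ac, hAcdef⟩ : ∃ M, M = A.map (starRingEnd ℂ) := ⟨_, rfl⟩
  obtain ⟨Bc, hBcdef⟩ : ∃ M, M = B.map (starRingEnd ℂ) := ⟨_, rfl⟩
  obtain ⟨N, hNdef⟩ : ∃ M, M = S.map (starRingEnd ℂ) := ⟨_, rfl⟩
  have hmapmap : ∀ {p q : ℕ} (M : Matrix (Fin p) (Fin q) ℂ),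
      (M.map (starRingEnd ℂ)).map (starRingEnd ℂ) = M := by
    intro p q M; ext i j; simp
  have hNc : N.map (starRingEnd ℂ) = S := by rw [hNdef, hmapmap]
  -- rewrite hrange in terms of N
  have hMap : (S * Sᴴ).map (starRingEnd ℂ) = N * Nᴴ := by
    rw [hNdef]
    ext i j
    simp only [Matrix.map_apply, Matrix.mul_apply, conjTranspose_apply, star_sum, star_mul',
      star_star, starRingEnd_apply]
  rw [hMap] at hrange
  have hNA : LinearMap.range N.mulVecLin = LinearMap.range A.mulVecLin := by
    rw [← range_self_mul_conjT]; exact hrange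
  -- symmetry facts
  have hBT : IsMoorePenrose A Bᵀ := by
    have h := mp_transpose hB
    rwa [hA] at h
  have hBsym : Bᵀ = B := mp_unique hBT hB
  have hTsym : (Sᵀ * A * S)ᵀ = Sᵀ * A * S := by
    rw [transpose_mul, transpose_mul, transpose_transpose, hA, Matrix.mul_assoc]
  have hBtT : IsMoorePenrose (Sᵀ * A * S) Btᵀ := by
    have h := mp_transpose hBt
    rwa [hTsym] at h
  have hBtsym : Btᵀ = Bt := mp_unique hBtT hBt
  -- conjugate transposes as conjugates
  have hAH : Aᴴ = Ac := by
    rw [hAcdef]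
    ext i j
    simp only [conjTranspose_apply, Matrix.map_apply, starRingEnd_apply]
    congr 1
    conv_lhs => rw [← hA]
    rfl
  have hBH : Bᴴ = Bc := by
    rw [hBcdef]
    ext i j
    simp only [conjTranspose_apply, Matrix.map_apply, starRingEnd_apply]
    congr 1
    conv_lhs => rw [← hBsym]
    rfl
  have hBA : B * A = Ac * Bc := by
    calc B * A = (B * A)ᴴ := hB.2.2.2.symm
      _ = Aᴴ * Bᴴ := conjTranspose_mul _ _
      _ = Ac * Bc := by rw [hAH, hBH]
  have hBAmap : Bc * Ac = A * B := by
    have h := congrArg (fun M : Matrix (Fin d) (Fin d) ℂ => M.map (starRingEnd ℂ)) hBA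
    rw [hAcdef, hBcdef] at h
    rw [Matrix.map_mul, Matrix.map_mul, hmapmap, hmapmap] at h
    rw [hAcdef, hBcdef]
    exact h
  -- range facts as memberships
  have hconjA_mem : ∀ v, Ac.mulVec v ∈ LinearMap.range S.mulVecLin := by
    intro v
    have h1 : A.mulVec (star v) ∈ LinearMap.range N.mulVecLin := by
      rw [hNA]; exact ⟨star v, rfl⟩
    obtain ⟨y, hy⟩ := h1
    rw [Matrix.mulVecLin_apply] at hy
    refine ⟨star y, ?_⟩
    rw [Matrix.mulVecLin_apply]
    have h2 : S.mulVec (star y) = star (N.mulVec y) := by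
      conv_lhs => rw [← hNc]
      rw [mapc_mulVec, star_star]
    rw [h2, hy, hAcdef, mapc_mulVec]
  have hS_mem : ∀ v, S.mulVec v ∈ LinearMap.range Ac.mulVecLin := by
    intro v
    have h1 : N.mulVec (star v) ∈ LinearMap.range A.mulVecLin := by
      rw [← hNA]; exact ⟨star v, rfl⟩
    obtain ⟨y, hy⟩ := h1
    rw [Matrix.mulVecLin_apply] at hy
    refine ⟨star y, ?_⟩
    rw [Matrix.mulVecLin_apply]
    have h2 : S.mulVec v = star (N.mulVec (star v)) := by
      conv_lhs => rw [← hNc]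
      rw [mapc_mulVec]
    rw [hAcdef, mapc_mulVec, star_star, hy, h2]
  obtain ⟨U, hU⟩ : ∃ U : Matrix (Fin m) (Fin d) ℂ, Ac = S * U :=
    exists_right_factor Ac S hconjA_mem
  obtain ⟨W, hW⟩ : ∃ W : Matrix (Fin d) (Fin m) ℂ, S = Ac * W :=
    exists_right_factor S Ac hS_mem
  -- key identities
  have hQA : B * A * Ac = Ac := by
    have p2 : A * (B * A) = A := by rw [← Matrix.mul_assoc]; exact hB.1
    have h := congrArg conjTranspose p2
    rw [conjTranspose_mul, hB.2.2.2, hAH] at h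
    exact h
  have hBAS : B * A * S = S := by
    rw [hW, ← Matrix.mul_assoc, hQA]
  have hSTAB : Sᵀ * A * B = Sᵀ := by
    have h := congrArg Matrix.transpose hBAS
    rw [transpose_mul, transpose_mul, hA, hBsym] at h
    rw [Matrix.mul_assoc]; exact h
  have hSTA : Sᵀ * A = (Sᵀ * A * S) * (U * Bc) := by
    have h : (Sᵀ * A * S) * (U * Bc) = Sᵀ * A := by
      calc (Sᵀ * A * S) * (U * Bc) = (Sᵀ * A) * ((S * U) * Bc) := by
            simp only [Matrix.mul_assoc]
        _ = (Sᵀ * A) * (Ac * Bc) := by rw [← hU]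
        _ = (Sᵀ * A) * (B * A) := by rw [hBA]
        _ = Sᵀ * A := by rw [← Matrix.mul_assoc, hSTAB]
    exact h.symm
  have hSG : (Sᵀ * A * S) * (U * (Bc * B)) = Sᵀ := by
    calc (Sᵀ * A * S) * (U * (Bc * B)) = ((Sᵀ * A * S) * (U * Bc)) * B := by
          simp only [Matrix.mul_assoc]
      _ = (Sᵀ * A) * B := by rw [← hSTA]
      _ = Sᵀ := hSTAB
  have hproj : (Sᵀ * A * S) * Bt * Sᵀ = Sᵀ := by
    have h1 : (Sᵀ * A * S) * Bt * ((Sᵀ * A * S) * (U * (Bc * B)))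
        = (Sᵀ * A * S) * (U * (Bc * B)) := by
      rw [← Matrix.mul_assoc, hBt.1]
    rw [hSG] at h1
    exact h1
  have hproj2 : S * Bt * (Sᵀ * A * S) = S := by
    have h := congrArg Matrix.transpose hproj
    rw [transpose_mul, transpose_mul, transpose_transpose, hBtsym, hTsym] at h
    rw [Matrix.mul_assoc]; exact h
  -- the two remaining bridges
  have hAc' : Ac = Uᵀ * Sᵀ := by
    have h := congrArg Matrix.transpose hU
    rw [transpose_mul] at h
    have hAcT : Acᵀ = Ac := by
      rw [hAcdef, ← Matrix.transpose_map, hA]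
    rw [hAcT] at h
    exact h
  have hABU : A * B = Bc * (Uᵀ * Sᵀ) := by
    rw [← hBAmap, hAc']
  have hAS : A * S = Bc * (Uᵀ * (Sᵀ * (A * S))) := by
    calc A * S = (A * B * A) * S := by rw [hB.1]
      _ = (A * B) * (A * S) := by simp only [Matrix.mul_assoc]
      _ = (Bc * (Uᵀ * Sᵀ)) * (A * S) := by rw [hABU]
      _ = Bc * (Uᵀ * (Sᵀ * (A * S))) := by simp only [Matrix.mul_assoc]
  have hAC : A * (S * Bt * Sᵀ) = A * B := by
    have hproj' : Sᵀ * (A * (S * (Bt * Sᵀ))) = Sᵀ := by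
      have h := hproj
      simp only [Matrix.mul_assoc] at h
      exact h
    calc A * (S * Bt * Sᵀ) = (A * S) * (Bt * Sᵀ) := by simp only [Matrix.mul_assoc]
      _ = (Bc * (Uᵀ * (Sᵀ * (A * S)))) * (Bt * Sᵀ) := by rw [← hAS]
      _ = Bc * (Uᵀ * (Sᵀ * (A * (S * (Bt * Sᵀ))))) := by simp only [Matrix.mul_assoc]
      _ = Bc * (Uᵀ * Sᵀ) := by rw [hproj']
      _ = A * B := hABU.symm
  have hCA : (S * Bt * Sᵀ) * A = B * A := by
    calc (S * Bt * Sᵀ) * A = (S * Bt) * (Sᵀ * A) := Matrix.mul_assoc _ _ _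
      _ = (S * Bt) * ((Sᵀ * A * S) * (U * Bc)) := congrArg (fun X => (S * Bt) * X) hSTA
      _ = ((S * Bt) * (Sᵀ * A * S)) * (U * Bc) := (Matrix.mul_assoc _ _ _).symm
      _ = S * (U * Bc) := by rw [hproj2]
      _ = (S * U) * Bc := (Matrix.mul_assoc _ _ _).symm
      _ = Ac * Bc := by rw [← hU]
      _ = B * A := hBA.symm
  have hCAC : (S * Bt * Sᵀ) * (A * (S * Bt * Sᵀ)) = S * Bt * Sᵀ := by
    calc (S * Bt * Sᵀ) * (A * (S * Bt * Sᵀ))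
        = S * (Bt * (Sᵀ * A * S) * Bt) * Sᵀ := by simp only [Matrix.mul_assoc]
      _ = S * Bt * Sᵀ := by rw [hBt.2.1, Matrix.mul_assoc]
  have hC : S * Bt * Sᵀ = B := by
    calc S * Bt * Sᵀ = (S * Bt * Sᵀ) * (A * (S * Bt * Sᵀ)) := hCAC.symm
      _ = (S * Bt * Sᵀ) * (A * B) := by rw [hAC]
      _ = ((S * Bt * Sᵀ) * A) * B := (Matrix.mul_assoc _ _ _).symm
      _ = (B * A) * B := by rw [hCA]
      _ = B := hB.2.1
  intro b
  constructor
  · refine ⟨(U * (Bc * B)).mulVec b, ?_⟩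
    rw [Matrix.mulVecLin_apply, Matrix.mulVec_mulVec, hSG]
  · calc S.mulVec (Bt.mulVec (Sᵀ.mulVec b))
        = (S * Bt * Sᵀ).mulVec b := by
          rw [Matrix.mulVec_mulVec, Matrix.mulVec_mulVec]
      _ = B.mulVec b := by rw [hC]
end
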